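/- Let L be the real Lie algebra of complex 4×4 matrices of the form [[x, u, v, i·w], [0, y, i·z, −conj(v)], [0, 0, −y, −conj(u)], [0, 0, 0, −x]] (x, y, z, w ∈ ℝ, u, v ∈ ℂ) under the commutator bracket. Then L is completely solvable in the following sense: there exists a chain of Lie ideals 0 = I₀ ⊆ I₁ ⊆ I₂ ⊆ ⋯ ⊆ I₈ = L of L with dim_ℝ I_k = k for every k = 0, 1, …, 8. -/

import Mathlib

open Matrix

attribute [local instance 100] LieRing.ofAssociativeRing

/-- The matrix `[[x, u, v, i·w], [0, y, i·z, −v̄], [0, 0, −y, −ū], [0, 0, 0, −x]]`. -/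
def matL (x y z w : ℝ) (u v : ℂ) : Matrix (Fin 4) (Fin 4) ℂ :=
  !![(x : ℂ), u, v, Complex.I * (w : ℂ);
     0, (y : ℂ), Complex.I * (z : ℂ), -(star v);
     0, 0, -(y : ℂ), -(star u);
     0, 0, 0, -(x : ℂ)]

/-- The set `L` of all matrices of the above form. -/
def Lset : Set (Matrix (Fin 4) (Fin 4) ℂ) :=
  {A | ∃ (x y z w : ℝ) (u v : ℂ), A = matL x y z w u v}

/-!
In the real coordinates `(w, Re v, Im v, z, Re u, Im u, y, x)` the operator `ad X` is upper
triangular for every `X ∈ L`: the bracket of `X` with the `i`-th basis vector only involves basis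
vectors of index at most `i`. Hence the spans of the initial segments of this basis form a complete
flag of ideals.
-/

namespace Module.Basis

section Flag

variable {K M : Type*} [DivisionRing K] [AddCommGroup M] [Module K M] {n : ℕ}

theorem finrank_flag (b : Basis (Fin n) K M) (k : Fin (n + 1)) :
    finrank K (b.flag k) = k := by
  have himage : b '' {i | i.castSucc < k} = Set.range (b ∘ Fin.castLE k.is_le) := by
    ext m
    constructor
    · rintro ⟨i, hi, rfl⟩
      exact ⟨⟨i, hi⟩, rfl⟩
    · rintro ⟨i, rfl⟩
      exact ⟨Fin.castLE k.is_le i, i.isLt, rfl⟩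
  rw [flag, himage, finrank_span_eq_card (b.linearIndependent.comp _ (Fin.castLE_injective _)),
    Fintype.card_fin]

end Flag

section LieFlag

variable {R L : Type*} [CommRing R] [LieRing L] [LieAlgebra R L] {n : ℕ}

theorem lie_mem_flag (b : Basis (Fin n) R L) (hb : ∀ (x : L) i, ⁅x, b i⁆ ∈ b.flag i.succ)
    (k : Fin (n + 1)) (x : L) {m : L} (hm : m ∈ b.flag k) : ⁅x, m⁆ ∈ b.flag k := by
  induction hm using Submodule.span_induction with
  | mem _ hm =>
    obtain ⟨i, hi, rfl⟩ := hm
    exact b.flag_mono (Fin.castSucc_lt_iff_succ_le.mp hi) (hb x i)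
  | zero => simp
  | add _ _ _ _ h₁ h₂ => simpa only [lie_add] using add_mem h₁ h₂
  | smul r _ _ h => simpa only [lie_smul] using Submodule.smul_mem _ r h

def lieIdealFlag (b : Basis (Fin n) R L) (hb : ∀ (x : L) i, ⁅x, b i⁆ ∈ b.flag i.succ)
    (k : Fin (n + 1)) : LieIdeal R L :=
  { b.flag k with lie_mem := b.lie_mem_flag hb k _ }

end LieFlag

end Module.Basis

def matLin : (Fin 8 → ℝ) →ₗ[ℝ] Matrix (Fin 4) (Fin 4) ℂ where
  toFun c := matL (c 7) (c 6) (c 3) (c 0) ⟨c 4, c 5⟩ ⟨c 1, c 2⟩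
  map_add' c d := by
    ext i j
    fin_cases i <;> fin_cases j <;> simp [matL, Complex.ext_iff] <;> ring
  map_smul' r c := by
    ext i j
    fin_cases i <;> fin_cases j <;> simp [matL, Complex.ext_iff]

theorem matLin_injective : Function.Injective matLin := by
  refine Function.LeftInverse.injective (g := fun A => ![(A 0 3).im, (A 0 2).re, (A 0 2).im,
    (A 1 2).im, (A 0 1).re, (A 0 1).im, (A 1 1).re, (A 0 0).re]) fun c => ?_
  funext i
  fin_cases i <;> simp [matLin, matL]

theorem range_matLin : Set.range matLin = Lset := by
  ext A
  constructor
  · rintro ⟨c, rfl⟩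
    exact ⟨_, _, _, _, _, _, rfl⟩
  · rintro ⟨x, y, z, w, u, v, rfl⟩
    exact ⟨![w, v.re, v.im, z, u.re, u.im, y, x], rfl⟩

def bracketCoords (c d : Fin 8 → ℝ) : Fin 8 → ℝ :=
  ![2 * (c 7 * d 0 - d 7 * c 0) + 2 * (d 5 * c 1 - d 4 * c 2) + 2 * (d 2 * c 4 - d 1 * c 5),
    (c 7 + c 6) * d 1 - (d 7 + d 6) * c 1 - (c 5 * d 3 - d 5 * c 3),
    (c 7 + c 6) * d 2 - (d 7 + d 6) * c 2 + (c 4 * d 3 - d 4 * c 3),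
    2 * (c 6 * d 3 - d 6 * c 3),
    (c 7 - c 6) * d 4 - (d 7 - d 6) * c 4,
    (c 7 - c 6) * d 5 - (d 7 - d 6) * c 5,
    0, 0]

set_option maxHeartbeats 400000 in
theorem matLin_lie (c d : Fin 8 → ℝ) : ⁅matLin c, matLin d⁆ = matLin (bracketCoords c d) := by
  rw [Ring.lie_def]
  ext i j
  fin_cases i <;> fin_cases j <;>
    apply Complex.ext <;> simp [matLin, matL, bracketCoords] <;> ring

theorem bracketCoords_single_of_lt (c : Fin 8 → ℝ) {i j : Fin 8} (hij : i < j) :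
    bracketCoords c (Pi.single i 1) j = 0 := by
  fin_cases i <;> fin_cases j <;> simp_all [bracketCoords]

noncomputable def Lalg : LieSubalgebra ℝ (Matrix (Fin 4) (Fin 4) ℂ) :=
  { LinearMap.range matLin with
    lie_mem' := by
      rintro _ _ ⟨c, rfl⟩ ⟨d, rfl⟩
      exact ⟨bracketCoords c d, (matLin_lie c d).symm⟩ }

namespace Lalg

noncomputable def coords : (Fin 8 → ℝ) ≃ₗ[ℝ] Lalg :=
  LinearEquiv.ofInjective matLin matLin_injective

theorem lie_coords (c d : Fin 8 → ℝ) : ⁅coords c, coords d⁆ = coords (bracketCoords c d) :=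
  Subtype.ext (matLin_lie c d)

noncomputable def basis : Module.Basis (Fin 8) ℝ Lalg :=
  (Pi.basisFun ℝ (Fin 8)).map coords

theorem lie_basis_mem_flag (x : Lalg) (i : Fin 8) : ⁅x, basis i⁆ ∈ basis.flag i.succ := by
  obtain ⟨c, rfl⟩ := coords.surjective x
  rw [Module.Basis.flag, Module.Basis.mem_span_image, basis, Module.Basis.map_apply,
    Pi.basisFun_apply, lie_coords, Module.Basis.map_repr, LinearEquiv.trans_apply,
    LinearEquiv.symm_apply_apply]
  intro j hj
  rw [Finset.mem_coe, Finsupp.mem_support_iff, Pi.basisFun_repr] at hj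
  exact Fin.castSucc_lt_succ_iff.mpr (not_lt.mp fun hij => hj (bracketCoords_single_of_lt c hij))

end Lalg

/-- `L` is a real Lie algebra which is completely solvable: it admits a complete
flag of Lie ideals `0 = I₀ ⊆ I₁ ⊆ ⋯ ⊆ I₈ = L` with `dim_ℝ I_k = k`. -/
theorem stmt5 :
    ∃ Lalg : LieSubalgebra ℝ (Matrix (Fin 4) (Fin 4) ℂ),
      (Lalg : Set (Matrix (Fin 4) (Fin 4) ℂ)) = Lset ∧
      ∃ I : Fin 9 → LieIdeal ℝ Lalg,
        Monotone I ∧ I 0 = ⊥ ∧ I 8 = ⊤ ∧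
        ∀ k : Fin 9, Module.finrank ℝ (I k) = (k : ℕ) := by
  refine ⟨Lalg, range_matLin, Lalg.basis.lieIdealFlag Lalg.lie_basis_mem_flag,
    fun k l hkl => Lalg.basis.flag_mono hkl, ?_, ?_, Lalg.basis.finrank_flag⟩
  · rw [← LieSubmodule.toSubmodule_eq_bot]
    exact Lalg.basis.flag_zero
  · rw [← LieSubmodule.toSubmodule_eq_top]
    exact Lalg.basis.flag_last
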